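/- arXiv:1807.11360 — 2 statements merged into one kernel-verified Lean document; each statement's English description precedes it below -/
import Mathlib

section
/- Let q be a prime power and 1 ≤ m ≤ n ≤ q−1. If gcd(m, q−1) = 1 and gcd(n, q−1) = 1, then the monomial digraph D(q; m, n) is strong and diam(D(q; m, n)) = 3. -/
/-- `walkLen r k x y` means there is a directed walk of length exactly `k`
from `x` to `y` in the digraph with arc relation `r`. -/
def walkLen {V : Type*} (r : V → V → Prop) : ℕ → V → V → Prop
  | 0 => fun x y => x = y
  | k + 1 => fun x y => ∃ z, r x z ∧ walkLen r k z y

/-- The distance from `x` to `y`: the minimum length of a directed walk,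
`⊤` if `y` is not reachable from `x`. -/
noncomputable def ddist {V : Type*} (r : V → V → Prop) (x y : V) : ℕ∞ :=
  ⨅ n ∈ {n : ℕ | walkLen r n x y}, (n : ℕ∞)

/-- The diameter of the digraph: the maximum of distances over all ordered pairs. -/
noncomputable def ddiam {V : Type*} (r : V → V → Prop) : ℕ∞ :=
  ⨆ x, ⨆ y, ddist r x y

/-- A digraph is strong if every vertex is reachable from every vertex. -/
def IsStrongDigraph {V : Type*} (r : V → V → Prop) : Prop :=
  ∀ x y : V, ∃ n : ℕ, walkLen r n x y

/-- The arc relation of the monomial digraph `D(q; m, n)`: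
`(x₁, x₂) → (y₁, y₂)` iff `x₂ + y₂ = x₁ ^ m * y₁ ^ n`. -/
def monomialArc {F : Type*} [Field F] (m n : ℕ) (x y : F × F) : Prop :=
  x.2 + y.2 = x.1 ^ m * y.1 ^ n

/-
When `gcd(m, q - 1) = gcd(n, q - 1) = 1`, the maps `x ↦ x ^ m` and `x ↦ x ^ n` are bijections
of `F_q`, so every prescribed value `x₁ ^ m y₁ ^ n` can be met. This gives an explicit walk of
length exactly 3 between any two vertices, routed through the line `x₁ = 0` (when `y₁ ≠ 0`) or
`x₁ = 1` (when `y₁ = 0`). Conversely, every out-neighbour of `(0, 0)` lies on the line `x₂ = 0`,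
and no arc leads from that line to `(0, 1)`, so `dist((0, 0), (0, 1)) = 3`.
-/

theorem surjective_pow_of_coprime_card_sub_one {F : Type*} [Field F] [Fintype F] {k : ℕ}
    (hk : k ≠ 0) (h : k.Coprime (Fintype.card F - 1)) : Function.Surjective (fun x : F => x ^ k) := by
  classical
  intro y
  rcases eq_or_ne y 0 with rfl | hy
  · exact ⟨0, zero_pow hk⟩
  · have hc : (Nat.card Fˣ).Coprime k := by
      rw [Nat.card_eq_fintype_card, Fintype.card_units]
      exact h.symm
    obtain ⟨u, hu⟩ := (powCoprime hc).surjective (Units.mk0 y hy)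
    refine ⟨u, ?_⟩
    simpa using congrArg Units.val hu

section Walks

variable {V : Type*} {r : V → V → Prop}

theorem ddiam_le_of_forall_walkLen {k : ℕ} (h : ∀ x y, walkLen r k x y) : ddiam r ≤ k :=
  iSup₂_le fun x y => iInf₂_le k (h x y)

theorem le_ddist_of_forall_lt_not_walkLen {k : ℕ} {x y : V}
    (h : ∀ j < k, ¬ walkLen r j x y) : (k : ℕ∞) ≤ ddist r x y :=
  le_iInf₂ fun j hj => by
    by_contra hlt
    exact h j (by exact_mod_cast not_le.mp hlt) hj

theorem ddist_le_ddiam (x y : V) : ddist r x y ≤ ddiam r :=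
  le_iSup₂ (f := fun x y => ddist r x y) x y

end Walks

section MonomialDigraph

variable {F : Type*} [Field F] {m n : ℕ}

theorem monomialArc_walkLen_three (hm : m ≠ 0) (hn : n ≠ 0)
    (hrootm : Function.Surjective (fun x : F => x ^ m))
    (hrootn : Function.Surjective (fun x : F => x ^ n)) (x y : F × F) :
    walkLen (monomialArc m n) 3 x y := by
  obtain ⟨a, b⟩ := x
  obtain ⟨u, v⟩ := y
  rcases eq_or_ne u 0 with rfl | hu
  · obtain ⟨c, hc : c ^ n = _⟩ := hrootn (a ^ m - b - v)
    refine ⟨(1, a ^ m - b), ?_, (c, -v), ?_, (0, v), ?_, rfl⟩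
    · show b + (a ^ m - b) = a ^ m * 1 ^ n
      ring
    · show (a ^ m - b) + -v = 1 ^ m * c ^ n
      rw [hc]
      ring
    · show -v + v = c ^ m * 0 ^ n
      rw [zero_pow hn]
      ring
  · obtain ⟨c, hc : c ^ m = _⟩ := hrootm ((b + v) / u ^ n)
    refine ⟨(0, -b), ?_, (c, b), ?_, (u, v), ?_, rfl⟩
    · show b + -b = a ^ m * 0 ^ n
      rw [zero_pow hn]
      ring
    · show -b + b = 0 ^ m * c ^ n
      rw [zero_pow hm]
      ring
    · show b + v = c ^ m * u ^ n
      rw [hc]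
      field_simp

theorem not_monomialArc_walkLen_of_lt_three (hm : m ≠ 0) (hn : n ≠ 0) {k : ℕ} (hk : k < 3) :
    ¬ walkLen (monomialArc m n) k ((0 : F), (0 : F)) (0, 1) := by
  interval_cases k
  · intro h
    exact zero_ne_one (congrArg Prod.snd h)
  · rintro ⟨z, hz, rfl⟩
    have h : (0 : F) + 1 = 0 ^ m * 0 ^ n := hz
    simp [zero_pow hm] at h
  · rintro ⟨z, hz₁, w, hz₂, rfl⟩
    have h₁ : (0 : F) + z.2 = 0 ^ m * z.1 ^ n := hz₁
    have h₂ : z.2 + (1 : F) = z.1 ^ m * 0 ^ n := hz₂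
    simp only [zero_pow hm, zero_pow hn, zero_add, zero_mul, mul_zero] at h₁ h₂
    rw [h₁, zero_add] at h₂
    exact one_ne_zero h₂

end MonomialDigraph

theorem strong_and_diam_eq_three_of_gcd_one_general {p e m n : ℕ}
    (F : Type*) [Field F] [Fintype F] (hF : Fintype.card F = p ^ e)
    (hm : 1 ≤ m) (hmn : m ≤ n)
    (hgcdm : Nat.gcd m (p ^ e - 1) = 1) (hgcdn : Nat.gcd n (p ^ e - 1) = 1) :
    IsStrongDigraph (monomialArc (F := F) m n) ∧
      ddiam (monomialArc (F := F) m n) = 3 := by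
  have hm0 : m ≠ 0 := by omega
  have hn0 : n ≠ 0 := by omega
  have walk_three : ∀ x y : F × F, walkLen (monomialArc m n) 3 x y :=
    monomialArc_walkLen_three hm0 hn0
      (surjective_pow_of_coprime_card_sub_one hm0 (by rw [hF]; exact hgcdm))
      (surjective_pow_of_coprime_card_sub_one hn0 (by rw [hF]; exact hgcdn))
  refine ⟨fun x y => ⟨3, walk_three x y⟩, le_antisymm (ddiam_le_of_forall_walkLen walk_three) ?_⟩
  calc (3 : ℕ∞) ≤ ddist (monomialArc m n) ((0 : F), (0 : F)) (0, 1) :=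
        le_ddist_of_forall_lt_not_walkLen fun _ hk => not_monomialArc_walkLen_of_lt_three hm0 hn0 hk
    _ ≤ ddiam (monomialArc m n) := ddist_le_ddiam _ _

theorem strong_and_diam_eq_three_of_gcd_one {p e m n : ℕ} (hp : p.Prime) (he : 0 < e)
    (F : Type*) [Field F] [Fintype F] (hF : Fintype.card F = p ^ e)
    (hm : 1 ≤ m) (hmn : m ≤ n) (hn : n ≤ p ^ e - 1)
    (hgcdm : Nat.gcd m (p ^ e - 1) = 1) (hgcdn : Nat.gcd n (p ^ e - 1) = 1) :
    IsStrongDigraph (monomialArc (F := F) m n) ∧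
      ddiam (monomialArc (F := F) m n) = 3 :=
  strong_and_diam_eq_three_of_gcd_one_general F hF hm hmn hgcdm hgcdn
end

section
/- Let p be a prime. Then diam(D(p; p−1, p−1)) = 2p − 1. -/
section Walks

variable {V : Type*} {r : V → V → Prop}

theorem walkLen_add {m n : ℕ} {x y : V} :
    walkLen r (m + n) x y ↔ ∃ z, walkLen r m x z ∧ walkLen r n z y := by
  induction m generalizing x with
  | zero => simp [walkLen]
  | succ m ih =>
    rw [Nat.add_right_comm]
    simp only [walkLen, ih]
    aesop

theorem walkLen_one {x y : V} : walkLen r 1 x y ↔ r x y := by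
  simp [walkLen]

theorem walkLen.append {m n : ℕ} {x y z : V} (hxy : walkLen r m x y) (hyz : walkLen r n y z) :
    walkLen r (m + n) x z :=
  walkLen_add.2 ⟨y, hxy, hyz⟩

theorem walkLen.symm (hr : ∀ ⦃x y⦄, r x y → r y x) {n : ℕ} {x y : V} (h : walkLen r n x y) :
    walkLen r n y x := by
  induction n generalizing x with
  | zero => exact Eq.symm h
  | succ n ih =>
    obtain ⟨z, hxz, hzy⟩ := h
    exact (ih hzy).append (walkLen_one.2 (hr hxz))

theorem ddiam_le_of_forall_exists_walkLen {N : ℕ}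
    (h : ∀ x y, ∃ n ≤ N, walkLen r n x y) : ddiam r ≤ N := by
  refine iSup₂_le fun x y => ?_
  obtain ⟨n, hnN, hn⟩ := h x y
  exact (iInf₂_le n hn).trans (by exact_mod_cast hnN)

theorem le_ddiam_of_forall_walkLen_le {N : ℕ} (x y : V)
    (h : ∀ n, walkLen r n x y → N ≤ n) : (N : ℕ∞) ≤ ddiam r :=
  (le_iInf₂ fun n hn => by exact_mod_cast h n hn).trans
    (le_iSup₂ (f := fun x y => ddist r x y) x y)

end Walks

theorem monomialArc.symm {F : Type*} [Field F] {m : ℕ} ⦃x y : F × F⦄ :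
    monomialArc (F := F) m m x y → monomialArc m m y x := fun h => by
  unfold monomialArc at *
  rw [add_comm, mul_comm, h]

open Fintype

local notation "𝔇" F => monomialArc (F := F) (card F - 1) (card F - 1)

section FiniteField

variable {F : Type*} [Field F] [Fintype F]

open Classical in
noncomputable def nonzeroIndicator (a : F) : ℤ := if a = 0 then 0 else 1

theorem pow_card_sub_one_eq_nonzeroIndicator (a : F) :
    a ^ (card F - 1) = nonzeroIndicator a := by
  by_cases ha : a = 0
  · simp [nonzeroIndicator, ha, Nat.sub_ne_zero_of_lt Fintype.one_lt_card]
  · simp [nonzeroIndicator, ha, FiniteField.pow_card_sub_one_eq_one a ha]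

theorem walkLen_column_succ (c t : F) : walkLen (𝔇 F) 4 (c, t) (c, t + 1) := by
  by_cases hc : c = 0
  · subst hc
    refine ⟨(1, -t), ?_, (1, 1 + t), ?_, (0, -1 - t), ?_, (0, t + 1), ?_, rfl⟩ <;>
      simp [monomialArc, pow_card_sub_one_eq_nonzeroIndicator, nonzeroIndicator]
    ring
  · refine ⟨(0, -t), ?_, (0, t), ?_, (1, -t), ?_, (c, t + 1), ?_, rfl⟩ <;>
      simp [monomialArc, pow_card_sub_one_eq_nonzeroIndicator, nonzeroIndicator, hc]

theorem walkLen_column_add_nat (c t : F) (k : ℕ) : walkLen (𝔇 F) (4 * k) (c, t) (c, t + k) := by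
  induction k with
  | zero => simp [walkLen]
  | succ k ih => simpa [mul_add, add_assoc] using ih.append (walkLen_column_succ c (t + k))

theorem walkLen_column_add_int (c t : F) (m : ℤ) :
    walkLen (𝔇 F) (4 * m.natAbs) (c, t) (c, t + m) := by
  obtain ⟨k, rfl | rfl⟩ := Int.eq_nat_or_neg m
  · simpa using walkLen_column_add_nat c t k
  · simpa [sub_eq_add_neg] using (walkLen_column_add_nat c (t - k) k).symm monomialArc.symm

theorem exists_intCast_eq_natAbs_le (hp : (card F).Prime) (a : F) :
    ∃ m : ℤ, (m : F) = a ∧ m.natAbs ≤ card F / 2 := by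
  have : NeZero (card F) := ⟨hp.ne_zero⟩
  let e := ZMod.ringEquivOfPrime F hp rfl
  refine ⟨(e.symm a).valMinAbs, ?_, ZMod.natAbs_valMinAbs_le _⟩
  rw [← map_intCast e, ZMod.coe_valMinAbs, RingEquiv.apply_symm_apply]

theorem exists_walkLen_le_of_card_prime (hp : (card F).Prime) (x y : F × F) :
    ∃ n ≤ 4 * (card F / 2) + 1, walkLen (𝔇 F) n x y := by
  obtain ⟨m, hm, hmp⟩ :=
    exists_intCast_eq_natAbs_le hp (x.1 ^ (card F - 1) * y.1 ^ (card F - 1) - y.2 - x.2)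
  refine ⟨4 * m.natAbs + 1, by omega,
    (walkLen_column_add_int x.1 x.2 m).append (walkLen_one.2 ?_)⟩
  show x.2 + m + y.2 = _
  rw [hm]
  ring

theorem exists_walkLen_le_three_of_card_eq_two (h2 : card F = 2) (x y : F × F) :
    ∃ n ≤ 3, walkLen (𝔇 F) n x y := by
  have : Fact (Nat.Prime 2) := ⟨Nat.prime_two⟩
  have := charP_of_card_eq_prime h2
  have harc (u v : F × F) : (𝔇 F) u v ↔ u.2 + v.2 = u.1 * v.1 := by simp [monomialArc, h2]
  have h01 (a : F) : a = 0 ∨ a = 1 := by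
    have := pow_card_sub_one_eq_nonzeroIndicator a
    simp only [h2, nonzeroIndicator] at this
    split_ifs at this <;> simp_all
  obtain ⟨a, b⟩ := x
  obtain ⟨c, d⟩ := y
  obtain hd | hd : d = b ∨ d = b + 1 := by
    rcases h01 (d - b) with h | h
    · exact .inl (by linear_combination h)
    · exact .inr (by linear_combination h)
  · exact ⟨2, by omega, (0, -b), by simp [harc], (c, d), by simp [harc, hd], rfl⟩
  rcases h01 c with rfl | rfl
  · rcases h01 a with rfl | rfl
    · exact ⟨3, le_rfl, (1, -b), by simp [harc], (1, 1 + b), by simp [harc], (0, d), by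
        simp [harc, hd]; grind, rfl⟩
    · exact ⟨2, by omega, (1, 1 - b), by simp [harc], (0, d), by simp [harc, hd]; grind, rfl⟩
  · exact ⟨3, le_rfl, (0, -b), by simp [harc], (1, b), by simp [harc], (1, d), by
      simp [harc, hd]; grind, rfl⟩

theorem exists_intCast_bounds_of_walkLen_zero {n : ℕ} {y : F × F} (h : walkLen (𝔇 F) n 0 y) :
    ∃ S : ℤ, y.2 = S ∧ -(n + 1 : ℤ) ≤ 4 * S - 2 * nonzeroIndicator y.1 ∧
      4 * S - 2 * nonzeroIndicator y.1 ≤ n := by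
  induction n generalizing y with
  | zero =>
    obtain rfl : 0 = y := h
    exact ⟨0, by simp, by simp [nonzeroIndicator]⟩
  | succ n ih =>
    obtain ⟨z, hz, hzy⟩ := walkLen_add.1 h
    obtain ⟨S, hS, hlo, hhi⟩ := ih hz
    have harc : (𝔇 F) z y := walkLen_one.1 hzy
    refine ⟨nonzeroIndicator z.1 * nonzeroIndicator y.1 - S, ?_, ?_⟩
    · rw [eq_sub_of_add_eq' harc, hS, pow_card_sub_one_eq_nonzeroIndicator,
        pow_card_sub_one_eq_nonzeroIndicator]
      push_cast
      ring
    · -- the arc negates `4 * S - 2 * nonzeroIndicator _`, and subtracts `2` if exactly one of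
      -- `z.1`, `y.1` is zero
      unfold nonzeroIndicator at *
      push_cast
      split_ifs at * <;> omega

theorem two_mul_card_sub_one_le_of_walkLen_zero_one_half (hp : (card F).Prime)
    (h2 : card F ≠ 2) {n : ℕ} (h : walkLen (𝔇 F) n 0 (1, 2⁻¹)) : 2 * card F - 1 ≤ n := by
  have : Fact (card F).Prime := ⟨hp⟩
  have := charP_of_card_eq_prime (R := F) rfl
  obtain ⟨S, hS, hlo, hhi⟩ := exists_intCast_bounds_of_walkLen_zero h
  simp only [nonzeroIndicator, one_ne_zero, if_false] at hlo hhi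
  have htwo : (2 : F) ≠ 0 := by
    intro h
    have := Nat.le_of_dvd two_pos ((CharP.cast_eq_zero_iff F (card F) 2).1 (by exact_mod_cast h))
    have := hp.two_le
    omega
  have hdvd : (card F : ℤ) ∣ 2 * S - 1 := by
    rw [← CharP.intCast_eq_zero_iff F]
    push_cast
    rw [← hS, mul_inv_cancel₀ htwo, sub_self]
  have := Int.natAbs_le_of_dvd_ne_zero hdvd (by omega)
  omega

theorem three_le_of_walkLen_zero_zero_one (h2 : card F = 2) {n : ℕ}
    (h : walkLen (𝔇 F) n 0 (0, 1)) : 3 ≤ n := by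
  have : Fact (Nat.Prime 2) := ⟨Nat.prime_two⟩
  have := charP_of_card_eq_prime h2
  obtain ⟨S, hS, hlo, hhi⟩ := exists_intCast_bounds_of_walkLen_zero h
  simp only [nonzeroIndicator, if_true] at hlo hhi
  have hdvd : ((2 : ℕ) : ℤ) ∣ S - 1 := by
    rw [← CharP.intCast_eq_zero_iff F]
    push_cast
    rw [← hS, sub_self]
  omega

end FiniteField

theorem diam_eq_two_p_sub_one {p : ℕ} (hp : p.Prime)
    (F : Type*) [Field F] [Fintype F] (hF : Fintype.card F = p) :
    ddiam (monomialArc (F := F) (p - 1) (p - 1)) = ((2 * p - 1 : ℕ) : ℕ∞) := by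
  subst hF
  by_cases h2 : card F = 2
  · have h3 : 2 * card F - 1 = 3 := by omega
    rw [h3]
    exact le_antisymm
      (ddiam_le_of_forall_exists_walkLen (exists_walkLen_le_three_of_card_eq_two h2))
      (le_ddiam_of_forall_walkLen_le _ _ fun n => three_le_of_walkLen_zero_zero_one h2)
  · have hodd : 4 * (card F / 2) + 1 = 2 * card F - 1 := by
      have := hp.eq_two_or_odd
      omega
    refine le_antisymm ?_ (le_ddiam_of_forall_walkLen_le _ _ fun n =>
      two_mul_card_sub_one_le_of_walkLen_zero_one_half hp h2)
    exact hodd ▸ ddiam_le_of_forall_exists_walkLen (exists_walkLen_le_of_card_prime hp)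
end
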